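/- arXiv:2410.16521 — 3 statements merged into one kernel-verified Lean document; each statement's English description precedes it below -/
import Mathlib

section
/- The Milnor diagonal and augmentation make the mod-2 dual Steenrod algebra a bialgebra: the maps ψ and ε satisfy coassociativity (ψ ⊗ id_A) ∘ ψ = (id_A ⊗ ψ) ∘ ψ as F2-algebra homomorphisms A → A ⊗[F2] A ⊗[F2] A, and counitality (ε ⊗ id_A) ∘ ψ = id_A = (id_A ⊗ ε) ∘ ψ (after the canonical identifications F2 ⊗[F2] A ≅ A ≅ A ⊗[F2] F2). -/
open scoped TensorProduct

noncomputable section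

abbrev F2 := ZMod 2

/-- The mod-2 dual Steenrod algebra as a polynomial algebra on ξ₁, ξ₂, …. -/
abbrev A := MvPolynomial {n : ℕ // 1 ≤ n} F2

/-- The generators ξₙ, with the convention ξ₀ = 1. -/
def xi : ℕ → A
  | 0 => 1
  | n + 1 => MvPolynomial.X ⟨n + 1, by omega⟩

/-- The Milnor diagonal ψ(ξₙ) = Σ_{i=0}^{n} ξ_{n−i}^{2^i} ⊗ ξᵢ. -/
def ψ : A →ₐ[F2] A ⊗[F2] A :=
  MvPolynomial.aeval fun v =>
    ∑ i ∈ Finset.range (v.1 + 1), ((xi (v.1 - i)) ^ (2 ^ i)) ⊗ₜ[F2] xi i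

/-- The augmentation ε(ξₙ) = 0 for n ≥ 1. -/
def ε : A →ₐ[F2] F2 := MvPolynomial.aeval fun _ => 0

/-! In the form `ψ ξₙ = ∑_{i+j=n} ξᵢ^{2^j} ⊗ ξⱼ`, both sides of coassociativity send `ξₙ` to
`∑_{a+b+c=n} ξₐ^{2^{b+c}} ⊗ ξ_b^{2^c} ⊗ ξ_c`; on the left this needs `(x + y)^2 = x^2 + y^2` in
`A ⊗ A`. For counitality, `ε` kills every term of `ψ ξₙ` but one. Algebra maps out of the polynomial
algebra `A` are determined by their values on the generators. -/

open Finset Algebra.TensorProduct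

theorem Finset.Nat.sum_antidiagonal_antidiagonal_fst {M : Type*} [AddCommMonoid M]
    (f : ℕ → ℕ → ℕ → M) (n : ℕ) :
    ∑ p ∈ antidiagonal n, ∑ q ∈ antidiagonal p.1, f q.1 q.2 p.2 =
      ∑ p ∈ antidiagonal n, ∑ q ∈ antidiagonal p.2, f p.1 q.1 q.2 := by
  rw [sum_sigma', sum_sigma']
  refine sum_nbij' (fun x => ⟨(x.2.1, x.2.2 + x.1.2), (x.2.2, x.1.2)⟩)
    (fun x => ⟨(x.1.1 + x.2.1, x.2.2), (x.1.1, x.2.1)⟩) ?_ ?_ ?_ ?_ ?_ <;>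
    rintro ⟨⟨a, b⟩, ⟨c, d⟩⟩ h <;>
    simp only [mem_sigma, HasAntidiagonal.mem_antidiagonal] at h <;>
    obtain ⟨rfl, rfl⟩ := h <;>
    simp [add_assoc]

lemma xi_coe (v : {n : ℕ // 1 ≤ n}) : xi v = MvPolynomial.X v := by
  rcases v with ⟨_ | n, h⟩
  · omega
  · rfl

lemma ψ_xi (n : ℕ) : ψ (xi n) = ∑ p ∈ antidiagonal n, (xi p.1 ^ 2 ^ p.2) ⊗ₜ[F2] xi p.2 := by
  rw [← Nat.sum_antidiagonal_swap, Nat.sum_antidiagonal_eq_sum_range_succ_mk]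
  cases n with
  | zero => simp [xi, Algebra.TensorProduct.one_def]
  | succ n => exact MvPolynomial.aeval_X _ _

lemma ε_xi (n : ℕ) : ε (xi n) = if n = 0 then 1 else 0 := by
  cases n <;> simp [xi, ε]

instance : CharP (A ⊗[F2] A) 2 := charP_of_injective_algebraMap' F2 2

lemma ψ_xi_pow_two_pow (n k : ℕ) :
    ψ (xi n) ^ 2 ^ k =
      ∑ p ∈ antidiagonal n, (xi p.1 ^ 2 ^ (p.2 + k)) ⊗ₜ[F2] (xi p.2 ^ 2 ^ k) := by
  simp only [ψ_xi, sum_pow_char_pow, tmul_pow, ← pow_mul, ← pow_add]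

lemma assoc_map_ψ_ψ_xi (n : ℕ) :
    (Algebra.TensorProduct.assoc F2 F2 F2 A A A) (map ψ (AlgHom.id F2 A) (ψ (xi n))) =
      map (AlgHom.id F2 A) ψ (ψ (xi n)) := by
  have hfst : ∀ p ∈ antidiagonal n,
      (Algebra.TensorProduct.assoc F2 F2 F2 A A A)
        (map ψ (AlgHom.id F2 A) ((xi p.1 ^ 2 ^ p.2) ⊗ₜ[F2] xi p.2)) =
      ∑ q ∈ antidiagonal p.1,
        (xi q.1 ^ 2 ^ (q.2 + p.2)) ⊗ₜ[F2] ((xi q.2 ^ 2 ^ p.2) ⊗ₜ[F2] xi p.2) := by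
    intro p _
    simp only [map_tmul, map_pow, ψ_xi_pow_two_pow, TensorProduct.sum_tmul, map_sum, assoc_tmul,
      AlgHom.coe_id, id_eq]
  have hsnd : ∀ p ∈ antidiagonal n, map (AlgHom.id F2 A) ψ ((xi p.1 ^ 2 ^ p.2) ⊗ₜ[F2] xi p.2) =
      ∑ q ∈ antidiagonal p.2,
        (xi p.1 ^ 2 ^ (q.1 + q.2)) ⊗ₜ[F2] ((xi q.1 ^ 2 ^ q.2) ⊗ₜ[F2] xi q.2) := by
    intro p _
    simp only [map_tmul, ψ_xi, TensorProduct.tmul_sum, AlgHom.coe_id, id_eq]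
    exact sum_congr rfl fun q hq => by rw [HasAntidiagonal.mem_antidiagonal.mp hq]
  rw [ψ_xi, map_sum, map_sum, map_sum, sum_congr rfl hfst, sum_congr rfl hsnd]
  exact Nat.sum_antidiagonal_antidiagonal_fst
    (fun a b c => (xi a ^ 2 ^ (b + c)) ⊗ₜ[F2] ((xi b ^ 2 ^ c) ⊗ₜ[F2] xi c)) n

lemma lid_map_ε_ψ_xi (n : ℕ) :
    Algebra.TensorProduct.lid F2 A (map ε (AlgHom.id F2 A) (ψ (xi n))) = xi n := by
  rw [ψ_xi, map_sum, map_sum, sum_eq_single_of_mem (0, n) (by simp)]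
  · simp [xi]
  · rintro ⟨i, j⟩ _ hij
    have hi : i ≠ 0 := by rintro rfl; simp_all
    simp [ε_xi, hi]

lemma rid_map_ε_ψ_xi (n : ℕ) :
    Algebra.TensorProduct.rid F2 F2 A (map (AlgHom.id F2 A) ε (ψ (xi n))) = xi n := by
  rw [ψ_xi, map_sum, map_sum, sum_eq_single_of_mem (n, 0) (by simp)]
  · simp [ε_xi]
  · rintro ⟨i, j⟩ _ hij
    have hj : j ≠ 0 := by rintro rfl; simp_all
    simp [ε_xi, hj]

/-- The Milnor diagonal and augmentation make the mod-2 dual Steenrod algebra a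
bialgebra: ψ is coassociative and ε is a counit for ψ. -/
theorem steenrod_bialgebra :
    ((Algebra.TensorProduct.assoc F2 F2 F2 A A A).toAlgHom.comp
        ((Algebra.TensorProduct.map ψ (AlgHom.id F2 A)).comp ψ) =
      (Algebra.TensorProduct.map (AlgHom.id F2 A) ψ).comp ψ) ∧
    ((Algebra.TensorProduct.lid F2 A).toAlgHom.comp
        ((Algebra.TensorProduct.map ε (AlgHom.id F2 A)).comp ψ) = AlgHom.id F2 A) ∧
    ((Algebra.TensorProduct.rid F2 F2 A).toAlgHom.comp
        ((Algebra.TensorProduct.map (AlgHom.id F2 A) ε).comp ψ) = AlgHom.id F2 A) := by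
  refine ⟨?_, ?_, ?_⟩ <;> refine MvPolynomial.algHom_ext fun v => ?_ <;> rw [← xi_coe]
  · exact assoc_map_ψ_ψ_xi v
  · exact lid_map_ε_ψ_xi v
  · exact rid_map_ε_ψ_xi v
end
end

section
/- The doubled-up subalgebra P is a subcoalgebra of the mod-2 dual Steenrod algebra: for every p ∈ P, the element ψ(p) ∈ A ⊗[F2] A lies in the image of the canonical map P ⊗[F2] P → A ⊗[F2] A. In particular, ψ(ξ_n^2) = Σ_{i=0}^{n} ξ_{n−i}^{2^{i+1}} ⊗ ξ_i^2 for every n ≥ 1. -/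
open scoped TensorProduct

noncomputable section

/-- The doubled-up subalgebra P generated by the ξₙ². -/
def P : Subalgebra F2 A := Algebra.adjoin F2 {x : A | ∃ n, 1 ≤ n ∧ x = xi n ^ 2}

/-!
Since `A ⊗ A` has characteristic 2, `ψ (ξₙ²) = ψ(ξₙ)²` is computed termwise by the Frobenius:
it is the sum of the pure tensors `ξ_{n-i}^{2^{i+1}} ⊗ ξᵢ²`, whose factors lie in `P`. The span of
the pure tensors `a ⊗ b` with `a, b ∈ P` is the image of the algebra map `P ⊗ P → A ⊗ A`, hence a
subalgebra, so its preimage under `ψ` is a subalgebra containing the generators of `P`.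
-/

theorem Subalgebra.span_tmul_eq_toSubmodule_range_map {R B C : Type*} [CommSemiring R]
    [Semiring B] [Algebra R B] [Semiring C] [Algebra R C] (S : Subalgebra R B)
    (T : Subalgebra R C) :
    Submodule.span R {z : B ⊗[R] C | ∃ a ∈ S, ∃ b ∈ T, z = a ⊗ₜ b} =
      Subalgebra.toSubmodule (Algebra.TensorProduct.map S.val T.val).range := by
  have h : Subalgebra.toSubmodule (Algebra.TensorProduct.map S.val T.val).range =
      LinearMap.range (TensorProduct.map S.val.toLinearMap T.val.toLinearMap) := rfl
  rw [h, TensorProduct.range_map_eq_span_tmul]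
  congr 1
  ext z
  simp [eq_comm]

theorem Subalgebra.tmul_mem_range_map {R B C : Type*} [CommSemiring R] [Semiring B]
    [Algebra R B] [Semiring C] [Algebra R C] {S : Subalgebra R B} {T : Subalgebra R C}
    {a : B} {b : C} (ha : a ∈ S) (hb : b ∈ T) :
    a ⊗ₜ[R] b ∈ (Algebra.TensorProduct.map S.val T.val).range :=
  ⟨⟨a, ha⟩ ⊗ₜ ⟨b, hb⟩, rfl⟩

instance inst_s1 : CharP (A ⊗[F2] A) 2 := charP_of_injective_algebraMap' F2 2

theorem psi_xi (n : ℕ) :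
    ψ (xi n) = ∑ i ∈ Finset.range (n + 1), (xi (n - i) ^ 2 ^ i) ⊗ₜ[F2] xi i := by
  cases n with
  | zero => simp [xi, Algebra.TensorProduct.one_def]
  | succ m => exact MvPolynomial.aeval_X _ _

theorem psi_xi_sq (n : ℕ) :
    ψ (xi n ^ 2) = ∑ i ∈ Finset.range (n + 1), (xi (n - i) ^ 2 ^ (i + 1)) ⊗ₜ[F2] (xi i ^ 2) := by
  rw [map_pow, psi_xi, sum_pow_char]
  refine Finset.sum_congr rfl fun i _ => ?_
  rw [Algebra.TensorProduct.tmul_pow, ← pow_mul, ← pow_succ]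

theorem xi_sq_mem_P (n : ℕ) : xi n ^ 2 ∈ P := by
  cases n with
  | zero => simp [xi, P.one_mem]
  | succ m => exact Algebra.subset_adjoin ⟨m + 1, by omega, rfl⟩

theorem xi_pow_two_pow_succ_mem_P (n i : ℕ) : xi n ^ 2 ^ (i + 1) ∈ P := by
  rw [pow_succ', pow_mul]
  exact pow_mem (xi_sq_mem_P n) _

theorem P_le_comap_psi_range_map :
    P ≤ (Algebra.TensorProduct.map P.val P.val).range.comap ψ := by
  refine Algebra.adjoin_le ?_
  rintro _ ⟨n, -, rfl⟩
  rw [SetLike.mem_coe, Subalgebra.mem_comap, psi_xi_sq]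
  exact Subalgebra.sum_mem _ fun i _ =>
    Subalgebra.tmul_mem_range_map (xi_pow_two_pow_succ_mem_P _ _) (xi_sq_mem_P i)

/-- P is a subcoalgebra: ψ(p) lies in the image of P ⊗ P → A ⊗ A for every p ∈ P;
in particular ψ(ξₙ²) = Σ_{i=0}^{n} ξ_{n−i}^{2^{i+1}} ⊗ ξᵢ² for n ≥ 1. -/
theorem P_subcoalgebra :
    (∀ p ∈ P, ψ p ∈
      Submodule.span F2 {z : A ⊗[F2] A | ∃ a ∈ P, ∃ b ∈ P, z = a ⊗ₜ[F2] b}) ∧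
    (∀ n, 1 ≤ n → ψ (xi n ^ 2) =
      ∑ i ∈ Finset.range (n + 1), ((xi (n - i)) ^ (2 ^ (i + 1))) ⊗ₜ[F2] (xi i ^ 2)) := by
  refine ⟨fun p hp => ?_, fun n _ => psi_xi_sq n⟩
  rw [Subalgebra.span_tmul_eq_toSubmodule_range_map]
  exact P_le_comap_psi_range_map hp
end
end

section
/- The primitives of the comodule F2[q_0, q_1, …] are exactly the polynomials in q_0: an element x ∈ M satisfies ρ(x) = 1 ⊗ x if and only if x is an F2-linear combination of the powers q_0^k for k ≥ 0 (equivalently, x lies in the image of Polynomial F2 → M sending the polynomial variable to q_0). -/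
open scoped TensorProduct

noncomputable section

/-- The polynomial algebra F2[q₀, q₁, …]. -/
abbrev M := MvPolynomial ℕ F2

/-- The coaction ρ(qₙ) = Σ_{i=0}^{n} ξ_{n−i}^{2^{i+1}} ⊗ qᵢ. -/
def ρ : M →ₐ[F2] A ⊗[F2] M :=
  MvPolynomial.aeval fun n =>
    ∑ i ∈ Finset.range (n + 1), ((xi (n - i)) ^ (2 ^ (i + 1))) ⊗ₜ[F2] (MvPolynomial.X i : M)

/-!
Polynomials in `q₀` are primitive because `q₀` is and the primitives form a subalgebra.
Conversely, let `x` be primitive and suppose the largest index `m` of a variable of `x` is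
positive. Apply to `ρ x = 1 ⊗ x` the algebra map `A ⊗ M → M` sending `ξₘ ↦ q_{m+1}`, the
other `ξₖ ↦ 0`, and `qₘ ↦ 0`. On the right this kills the monomials of `x` containing `qₘ`.
On the left, since `ρ(qₘ) = ξₘ² ⊗ q₀ + ⋯ + 1 ⊗ qₘ`, it substitutes `qₘ ↦ q_{m+1}² q₀`; as
`q_{m+1}` does not occur in `x`, this is injective on the monomials of `x`, so a monomial
containing `qₘ` survives on the left with `q_{m+1}` in it, which cannot happen on the right.
-/

namespace MvPolynomial

variable {σ R : Type*} [CommSemiring R]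

def substExponent (i : σ) (e : σ →₀ ℕ) : (σ →₀ ℕ) →+ (σ →₀ ℕ) :=
  Finsupp.eraseAddHom i + (multiplesHom _ e).comp (Finsupp.applyAddHom i)

theorem substExponent_apply (i : σ) (e d : σ →₀ ℕ) :
    substExponent i e d = d.erase i + d i • e := rfl

theorem substExponent_injOn_support {x : MvPolynomial σ R} {i j : σ} {e : σ →₀ ℕ}
    (hij : i ≠ j) (hej : e j ≠ 0) (hj : j ∉ x.vars) :
    Set.InjOn (substExponent i e) x.support := by
  intro d₁ hd₁ d₂ hd₂ h
  have hi : d₁ i = d₂ i := by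
    have hdj := DFunLike.congr_fun h j
    simp only [substExponent_apply, Finsupp.add_apply, Finsupp.erase_ne hij.symm,
      mem_support_notMem_vars_zero hd₁ hj, mem_support_notMem_vars_zero hd₂ hj,
      Finsupp.smul_apply, smul_eq_mul, zero_add] at hdj
    exact Nat.eq_of_mul_eq_mul_right (Nat.pos_of_ne_zero hej) hdj
  rw [substExponent_apply, substExponent_apply, hi] at h
  rw [← Finsupp.erase_add_single i d₁, ← Finsupp.erase_add_single i d₂, add_right_cancel h, hi]

variable [DecidableEq σ]

theorem aeval_update_monomial (i : σ) (e : σ →₀ ℕ) :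
    aeval (Function.update X i (monomial e 1)) =
      AddMonoidAlgebra.mapDomainAlgHom R R (substExponent i e) := by
  refine algHom_ext fun n => ?_
  have hX : AddMonoidAlgebra.mapDomainAlgHom R R (substExponent i e) (X n) =
      monomial (substExponent i e (Finsupp.single n 1)) 1 :=
    AddMonoidAlgebra.mapDomain_single
  rw [aeval_X, hX, substExponent_apply]
  rcases eq_or_ne n i with rfl | hn
  · simp
  · simp [hn, X, Finsupp.erase_single_ne hn.symm]

theorem notMem_vars_aeval_update_zero {x : MvPolynomial σ R} (i : σ) {j : σ}
    (hj : j ∉ x.vars) : j ∉ (aeval (Function.update X i (0 : MvPolynomial σ R)) x).vars := by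
  intro hj'
  obtain ⟨n, hn, hjn⟩ := Finset.mem_biUnion.1 (vars_bind₁ _ x hj')
  rcases eq_or_ne n i with rfl | hni
  · simp at hjn
  · rw [Function.update_of_ne hni, vars_def, Multiset.mem_toFinset] at hjn
    exact hj (Multiset.mem_singleton.1 (Multiset.mem_of_le (degrees_X' n) hjn) ▸ hn)

theorem notMem_vars_of_aeval_update_monomial_eq_aeval_update_zero {x : MvPolynomial σ R}
    {i j : σ} {e : σ →₀ ℕ} (hej : e j ≠ 0) (hj : j ∉ x.vars)
    (h : aeval (Function.update X i (monomial e 1)) x =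
      aeval (Function.update X i (0 : MvPolynomial σ R)) x) :
    i ∉ x.vars := by
  intro hi
  have hij : i ≠ j := ne_of_mem_of_not_mem hi hj
  obtain ⟨d, hd, hdi⟩ := (mem_vars_iff_mem_support i).1 hi
  have hcoeff : coeff (substExponent i e d) (aeval (Function.update X i (monomial e 1)) x) =
      coeff d x := by
    rw [aeval_update_monomial]
    exact Finsupp.mapDomain_apply' _ (AddMonoidAlgebra.coeff x) subset_rfl
      (substExponent_injOn_support hij hej hj) hd
  have hexp : substExponent i e d j ≠ 0 := by
    simpa [substExponent_apply, Finsupp.erase_ne hij.symm, mem_support_notMem_vars_zero hd hj,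
      hej] using Finsupp.mem_support_iff.1 hdi
  refine notMem_vars_aeval_update_zero i hj
    ((mem_vars_iff_mem_support j).2 ⟨_, ?_, Finsupp.mem_support_iff.2 hexp⟩)
  rw [← h, mem_support_iff, hcoeff]
  exact mem_support_iff.1 hd

end MvPolynomial

open MvPolynomial

theorem ρ_X (n : ℕ) :
    ρ (X n) = ∑ i ∈ Finset.range (n + 1), (xi (n - i) ^ 2 ^ (i + 1)) ⊗ₜ[F2] (X i : M) :=
  aeval_X _ n

theorem ρ_X_zero : ρ (X 0) = (1 : A) ⊗ₜ[F2] (X 0 : M) := by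
  simp [ρ_X, xi]

def evalXiAt (m : ℕ) : A →ₐ[F2] M :=
  aeval fun j => if (j : ℕ) = m then X (m + 1) else 0

theorem evalXiAt_xi (m k : ℕ) :
    evalXiAt m (xi k) = if k = 0 then 1 else if k = m then X (m + 1) else 0 := by
  cases k with
  | zero => simp [xi]
  | succ k => simp [xi, evalXiAt]

def specializeAt (m : ℕ) : A ⊗[F2] M →ₐ[F2] M :=
  Algebra.TensorProduct.lift (evalXiAt m) (aeval (Function.update X m 0)) fun _ _ => .all _ _

theorem specializeAt_tmul (m : ℕ) (a : A) (x : M) :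
    specializeAt m (a ⊗ₜ x) = evalXiAt m a * aeval (Function.update X m 0) x :=
  Algebra.TensorProduct.lift_tmul _ _ _ a x

theorem specializeAt_ρ_X {m n : ℕ} (hm : 1 ≤ m) (hn : n ≤ m) :
    specializeAt m (ρ (X n)) = Function.update X m (X (m + 1) ^ 2 * X 0) n := by
  simp only [ρ_X, map_sum, specializeAt_tmul, map_pow, evalXiAt_xi, aeval_X]
  have hmid : ∀ i ∈ Finset.range n, 0 < i →
      (if n - i = 0 then 1 else if n - i = m then X (m + 1) else 0) ^ 2 ^ (i + 1) *
        Function.update X m (0 : M) i = 0 := by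
    intro i hi hi0
    rw [Finset.mem_range] at hi
    rw [if_neg (by omega), if_neg (by omega), zero_pow (by positivity), zero_mul]
  rcases n with _ | k
  · simp [Function.update_of_ne (by omega : 0 ≠ m)]
  rw [Finset.sum_range_succ, Finset.sum_range_succ',
    Finset.sum_eq_zero fun i hi => hmid (i + 1) (by simp at hi ⊢; omega) i.succ_pos]
  rcases hn.lt_or_eq with hlt | rfl
  · simp [hlt.ne, Function.update_of_ne (by omega : 0 ≠ m)]
  · simp

theorem aeval_update_eq_of_ρ_eq {x : M} (hx : ρ x = (1 : A) ⊗ₜ[F2] x) {m : ℕ} (hm : 1 ≤ m)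
    (hv : ∀ n ∈ x.vars, n ≤ m) :
    aeval (Function.update X m (X (m + 1) ^ 2 * X 0 : M)) x =
      aeval (Function.update X m 0) x :=
  calc _ = ((specializeAt m).toRingHom.comp ρ.toRingHom) x :=
        hom_congr_vars (Subsingleton.elim _ _)
          (fun n hn _ => by simp [specializeAt_ρ_X hm (hv n hn)]) rfl
    _ = aeval (Function.update X m 0) x := by simp [hx, specializeAt_tmul]

theorem vars_subset_zero_of_ρ_eq {x : M} (hx : ρ x = (1 : A) ⊗ₜ[F2] x) : x.vars ⊆ {0} := by
  by_contra h
  obtain ⟨n, hn, hn0⟩ := Finset.not_subset.1 h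
  have hne : x.vars.Nonempty := ⟨n, hn⟩
  have hle : ∀ k ∈ x.vars, k ≤ x.vars.max' hne := fun k hk => x.vars.le_max' k hk
  have hm : 1 ≤ x.vars.max' hne :=
    le_trans (by simpa [Nat.one_le_iff_ne_zero] using hn0) (hle n hn)
  have hm1 : x.vars.max' hne + 1 ∉ x.vars := fun h => by have := hle _ h; omega
  have hmonomial : (X (x.vars.max' hne + 1) ^ 2 * X 0 : M) =
      monomial (Finsupp.single (x.vars.max' hne + 1) 2 + Finsupp.single 0 1) 1 := by
    simp [X, monomial_pow, monomial_mul]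
  have hsubst := aeval_update_eq_of_ρ_eq hx hm hle
  rw [hmonomial] at hsubst
  exact notMem_vars_of_aeval_update_monomial_eq_aeval_update_zero (by simp) hm1 hsubst
    (x.vars.max'_mem hne)

/-- The primitives of the comodule F2[q₀, q₁, …] are exactly the polynomials in q₀:
ρ(x) = 1 ⊗ x iff x lies in the image of F2[T] → M sending T to q₀. -/
theorem primitives_eq_powers_of_q0 :
    ∀ x : M, ρ x = (1 : A) ⊗ₜ[F2] x ↔
      x ∈ (Polynomial.aeval (MvPolynomial.X 0 : M) : Polynomial F2 →ₐ[F2] M).range := by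
  intro x
  have hrange : (Polynomial.aeval (X 0 : M)).range = supported F2 ({0} : Set ℕ) := by
    rw [supported_eq_adjoin_X, Set.image_singleton, Algebra.adjoin_singleton_eq_range_aeval]
  have hprimitive : supported F2 ({0} : Set ℕ) ≤
      AlgHom.equalizer ρ Algebra.TensorProduct.includeRight := by
    rw [supported_eq_adjoin_X, Set.image_singleton, Algebra.adjoin_le_iff,
      Set.singleton_subset_iff]
    exact ρ_X_zero
  rw [hrange, mem_supported]
  exact ⟨fun hx => by exact_mod_cast vars_subset_zero_of_ρ_eq hx,
    fun hx => hprimitive (mem_supported.2 hx)⟩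
end
end
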